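/- Let F be a set of nonzero threads of an iteration containing all nonzero eventually constant threads, such that for every α < λ, every f ∈ F and every nonzero b ∈ B_α with b ≤ f(α), the threads c(b) and f are compatible in F. Then the map B_α → F-completion sending b to c(b) is injective and order-preserving, and moreover c(b) and c(b') are incompatible in F whenever b ⊓ b' = 0 in B_α. -/
import Mathlib

/-- For a set `F` of nonzero threads containing all nonzero eventually constant threads
and satisfying condition (1), the map `b ↦ c(b)` on `B_α` is injective, order-preserving,
and maps disjoint elements to threads incompatible in `F`. -/
theorem stmt_13 {B : Type*} [CompleteBooleanAlgebra B]
    {ι : Type*} [LinearOrder ι] (Bfam : ι → Set B)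
    (hmono : ∀ α β : ι, α ≤ β → Bfam α ⊆ Bfam β)
    (hsup : ∀ (α : ι) (S : Set B), S ⊆ Bfam α → sSup S ∈ Bfam α)
    (hinf : ∀ (α : ι) (S : Set B), S ⊆ Bfam α → sInf S ∈ Bfam α)
    (h : ι → B → B)
    (hdef : ∀ (α : ι) (b : B), h α b = sInf {c | c ∈ Bfam α ∧ b ≤ c})
    (IsThread : (ι → B) → Prop)
    (hIsThread : ∀ f, IsThread f ↔
      (∀ α, f α ∈ Bfam α) ∧ ∀ α β : ι, α ≤ β → f α = h α (f β))
    (c : B → (ι → B)) (hc : ∀ b γ, c b γ = h γ b)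
    (F : Set (ι → B))
    (hFthreads : ∀ f ∈ F, IsThread f ∧ ∃ γ, f γ ≠ ⊥)
    (hFec : ∀ f, IsThread f → (∃ γ, f γ ≠ ⊥) →
      (∃ β : ι, ∀ γ : ι, β ≤ γ → f γ = f β) → f ∈ F)
    (hcond1 : ∀ (α : ι), ∀ f ∈ F, ∀ b ∈ Bfam α, b ≠ ⊥ → b ≤ f α →
      ∃ e ∈ F, (∀ γ, e γ ≤ f γ) ∧ (∀ γ, e γ ≤ c b γ)) :
    ∀ α : ι,
      (∀ b ∈ Bfam α, ∀ b' ∈ Bfam α, c b = c b' → b = b') ∧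
      (∀ b ∈ Bfam α, ∀ b' ∈ Bfam α, b ≤ b' → ∀ γ, c b γ ≤ c b' γ) ∧
      (∀ b ∈ Bfam α, ∀ b' ∈ Bfam α, b ⊓ b' = ⊥ →
        ¬∃ e ∈ F, (∀ γ, e γ ≤ c b γ) ∧ (∀ γ, e γ ≤ c b' γ)) := by
  have hle : ∀ (α : ι) (b : B), b ≤ h α b := by
    intro α b; rw [hdef]; exact le_sInf fun x hx => hx.2
  have hfix : ∀ (α : ι) (b : B), b ∈ Bfam α → h α b = b := by
    intro α b hb
    refine le_antisymm ?_ (hle α b)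
    rw [hdef]; exact sInf_le ⟨hb, le_rfl⟩
  have hbot : ∀ α, (⊥ : B) ∈ Bfam α := by
    intro α; simpa using hsup α ∅ (by simp)
  intro α
  refine ⟨?_, ?_, ?_⟩
  · intro b hb b' hb' hcc
    have := congrFun hcc α
    rwa [hc, hc, hfix α b hb, hfix α b' hb'] at this
  · intro b _ b' _ hbb γ
    rw [hc, hc, hdef, hdef]
    exact sInf_le_sInf fun x hx => ⟨hx.1, hbb.trans hx.2⟩
  · rintro b hb b' hb' hdisj ⟨e, heF, he1, he2⟩
    have heα : e α = ⊥ := by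
      have h1 := he1 α; have h2 := he2 α
      rw [hc, hfix α b hb] at h1
      rw [hc, hfix α b' hb'] at h2
      have h3 := le_inf h1 h2
      rw [hdisj] at h3
      exact le_bot_iff.mp h3
    obtain ⟨hthread, γ0, hγ0⟩ := hFthreads e heF
    obtain ⟨hmem, hcompat⟩ := (hIsThread e).mp hthread
    apply hγ0
    rcases le_total γ0 α with hle' | hle'
    · rw [hcompat γ0 α hle', heα, hfix γ0 ⊥ (hbot γ0)]
    · have h4 := hcompat α γ0 hle'
      rw [heα] at h4
      have h5 : e γ0 ≤ h α (e γ0) := hle α (e γ0)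
      rw [← h4] at h5
      exact le_bot_iff.mp h5
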